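/- For every real X with 0 ≤ X < 1: (i) the double series D(X) = ∑_{n,k≥0} (a)_{2k+n}(1/2)_n(b)_n / ((3/2)_{k+n}(b+1)_{k+n} n!) · (−X/4)^k converges; (ii) for every k the series F_k = ∑_{j≥0} (a+2k)_j (1/2)_j (b)_j / ((3/2+k)_j (b+1+k)_j j!) converges; (iii) the series ∑_{k≥0} C_k F_k (−X)^k converges and equals D(X), where C_k = 4^{−k}(a)_{2k}/((3/2)_k (b+1)_k). -/

import Mathlib

/-!
Splitting `(a)_{2k+n} = (a)_{2k} (a+2k)_n`, `(3/2)_{k+n} = (3/2)_k (3/2+k)_n` and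
`(b+1)_{k+n} = (b+1)_k (b+1+k)_n`, the `(n, k)` term of `D(X)` is `C_k (-X)^k` times the `n`-th
term of `F_k`; so the identity is the rearrangement of the double series by columns, which is
legitimate once the double series converges absolutely.

The ratio of consecutive terms of `F_k` is at most `1 - p / (j + 4)` with `p = 2 - a/2 > 1`, so
each `F_k` converges by Raabe's test. In the `k`-direction the ratio of consecutive terms of
`D(X)` is at most `(k + 2) / (k + 1) * X`, hence the `(n, k)` term is bounded by
`(k + 1) X^k` times the `n`-th term of `F_0`, which is summable over `ℕ × ℕ` when `X < 1`.
-/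

/-- Pochhammer symbol (rising factorial) for a real argument. -/
noncomputable def poch (x : ℝ) (n : ℕ) : ℝ := (ascPochhammer ℝ n).eval x

open Filter

lemma poch_succ (x : ℝ) (n : ℕ) : poch x (n + 1) = poch x n * (x + n) :=
  ascPochhammer_succ_eval n x

lemma poch_pos {x : ℝ} (hx : 0 < x) (n : ℕ) : 0 < poch x n :=
  ascPochhammer_pos n x hx

lemma poch_add (x : ℝ) (m n : ℕ) : poch x (m + n) = poch x m * poch (x + m) n := by
  simpa [poch, Polynomial.eval_comp] using
    (congrArg (Polynomial.eval x) (ascPochhammer_mul (S := ℝ) m n)).symm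

lemma one_sub_div_le_rpow {p y : ℝ} (hp : 1 ≤ p) (hy : 1 ≤ y) :
    1 - p / y ≤ ((y - 1) / y) ^ p := by
  have hy0 : 0 < y := by linarith
  calc 1 - p / y = 1 + p * -(1 / y) := by ring
    _ ≤ (1 + -(1 / y)) ^ p :=
      one_add_mul_self_le_rpow_one_add (by rw [neg_le_neg_iff, div_le_one hy0]; exact hy) hp
    _ = ((y - 1) / y) ^ p := by congr 1; field_simp; ring

/-- Raabe's test, with the index shifted by `c`. -/
theorem summable_of_abs_succ_le_one_sub_div {f : ℕ → ℝ} {p c : ℝ} (hp : 1 < p) (hc : 1 ≤ c)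
    (hf : ∀ᶠ j : ℕ in atTop, |f (j + 1)| ≤ (1 - p / (j + c)) * |f j|) : Summable f := by
  obtain ⟨N, hN⟩ := eventually_atTop.1 hf
  set g : ℕ → ℝ := fun j => |f j| * ((j : ℝ) + c - 1) ^ p with hg_def
  have hg_succ : ∀ j ≥ N, g (j + 1) ≤ g j := by
    intro j hj
    have hjc : 1 ≤ (j : ℝ) + c := by linarith [j.cast_nonneg (α := ℝ)]
    calc g (j + 1) = |f (j + 1)| * ((j : ℝ) + c) ^ p := by
          simp only [hg_def]; push_cast; ring_nf
      _ ≤ (1 - p / (j + c)) * |f j| * ((j : ℝ) + c) ^ p := by gcongr; exact hN j hj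
      _ ≤ ((j + c - 1) / (j + c)) ^ p * |f j| * ((j : ℝ) + c) ^ p := by
          gcongr; exact one_sub_div_le_rpow hp.le hjc
      _ = |f j| * ((j : ℝ) + c - 1) ^ p := by
          rw [Real.div_rpow (by linarith) (by linarith)]
          field_simp
  have hg_le : ∀ j ≥ N, g j ≤ g N := fun j hj =>
    antitoneOn_nat_Ici_of_succ_le hg_succ (le_refl N) hj hj
  refine .of_norm_bounded_eventually_nat
    ((Real.summable_nat_rpow.2 (neg_lt_neg hp)).mul_left (g N)) ?_
  filter_upwards [eventually_ge_atTop (max N 1)] with j hj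
  have hj1 : (1 : ℝ) ≤ j := by exact_mod_cast le_of_max_le_right hj
  have hjp : 0 < (j : ℝ) ^ p := by positivity
  rw [Real.norm_eq_abs, Real.rpow_neg (by positivity), ← div_eq_mul_inv, le_div_iff₀ hjp]
  calc |f j| * (j : ℝ) ^ p ≤ g j := by
        simp only [hg_def]; gcongr; linarith
    _ ≤ g N := hg_le j (le_of_max_le_left hj)

noncomputable def termF (a b : ℝ) (k j : ℕ) : ℝ :=
  poch (a + 2 * (k : ℝ)) j * poch (1 / 2) j * poch b j /
    (poch (3 / 2 + (k : ℝ)) j * poch (b + 1 + (k : ℝ)) j * (Nat.factorial j : ℝ))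

noncomputable def termD (a b X : ℝ) (nk : ℕ × ℕ) : ℝ :=
  poch a (2 * nk.2 + nk.1) * poch (1 / 2) nk.1 * poch b nk.1 /
    (poch (3 / 2) (nk.2 + nk.1) * poch (b + 1) (nk.2 + nk.1) *
      (Nat.factorial nk.1 : ℝ)) * (-X / 4) ^ nk.2

section

variable {a b : ℝ}

lemma termF_succ (hb : -1 < b) (k j : ℕ) :
    termF a b k (j + 1) = termF a b k j *
      ((a + 2 * k + j) * (1 / 2 + j) * (b + j) / ((3 / 2 + k + j) * (b + 1 + k + j) * (j + 1))) := by
  have : 0 < poch (3 / 2 + (k : ℝ)) j := poch_pos (by positivity) j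
  have : 0 < poch (b + 1 + (k : ℝ)) j := poch_pos (by linarith [k.cast_nonneg (α := ℝ)]) j
  have : (0 : ℝ) < b + 1 + k + j := by linarith [k.cast_nonneg (α := ℝ), j.cast_nonneg (α := ℝ)]
  simp only [termF, poch_succ, Nat.factorial_succ]
  push_cast
  field_simp

/-- The exponent `2 - a / 2` lies strictly between `1` and `3 - a`, the true decay exponent of the
terms of `F_k`. -/
lemma termF_ratio_le {k x : ℝ} (ha0 : 0 < a) (ha2 : a < 2) (hb : -1 / 2 < b) (hb2 : b ≤ 3 / 2)
    (hk : 0 ≤ k) (hx : 1 ≤ x) :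
    (a + 2 * k + x) * (1 / 2 + x) * (b + x) / ((3 / 2 + k + x) * (b + 1 + k + x) * (x + 1)) ≤
      1 - (2 - a / 2) / (x + 4) := by
  have hden : 0 < (3 / 2 + k + x) * (b + 1 + k + x) * (x + 1) := by
    have : 0 < b + 1 + k + x := by linarith
    positivity
  rw [div_le_iff₀ hden, one_sub_div (by positivity), div_mul_eq_mul_div, le_div_iff₀ (by positivity)]
  obtain ⟨u, hu, rfl⟩ : ∃ u : ℝ, 0 ≤ u ∧ x = u + 1 := ⟨x - 1, by linarith, by ring⟩
  have ha : 0 ≤ 2 - a := by linarith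
  have hb' : 0 ≤ b + 1 / 2 := by linarith
  have hb2' : 0 ≤ 3 / 2 - b := by linarith
  nlinarith [mul_nonneg hu (sq_nonneg (u - k)), mul_nonneg hu (sq_nonneg (k - 1)),
    sq_nonneg (k - 1), mul_nonneg (mul_nonneg hu hu) hu, mul_nonneg hu (mul_nonneg hk hk),
    mul_nonneg (mul_nonneg hu hu) hk, mul_nonneg hu hk, mul_nonneg hk hk,
    mul_nonneg (mul_nonneg hu hu) ha, mul_nonneg hu ha, mul_nonneg hk ha,
    mul_nonneg hb2' ha, mul_nonneg hb' ha, mul_nonneg hu hb2', mul_nonneg hk hb2',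
    mul_nonneg hu hb', mul_nonneg hk hb']

lemma summable_termF (ha0 : 0 < a) (ha2 : a < 2) (hb : -1 / 2 < b) (hb2 : b ≤ 3 / 2) (k : ℕ) :
    Summable (termF a b k) := by
  refine summable_of_abs_succ_le_one_sub_div (p := 2 - a / 2) (c := 4) (by linarith) (by norm_num) ?_
  filter_upwards [eventually_ge_atTop 1] with j hj
  have hj1 : (1 : ℝ) ≤ j := by exact_mod_cast hj
  have hratio := termF_ratio_le ha0 ha2 hb hb2 k.cast_nonneg hj1
  have hnum : 0 ≤ (a + 2 * k + j) * (1 / 2 + j) * (b + j) := by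
    have : 0 ≤ b + j := by linarith
    positivity
  have hden : 0 < (3 / 2 + k + j) * (b + 1 + k + j) * (j + 1 : ℝ) := by
    have : 0 < b + 1 + k + j := by linarith [k.cast_nonneg (α := ℝ)]
    positivity
  rw [termF_succ (by linarith), abs_mul, mul_comm, abs_of_nonneg (div_nonneg hnum hden.le)]
  exact mul_le_mul_of_nonneg_right hratio (abs_nonneg _)

lemma termD_zero_snd (X : ℝ) (n : ℕ) : termD a b X (n, 0) = termF a b 0 n := by
  simp [termD, termF]

lemma termD_succ_snd (hb : -1 < b) (X : ℝ) (n k : ℕ) :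
    termD a b X (n, k + 1) = termD a b X (n, k) *
      ((a + (2 * k + n)) * (a + (2 * k + n) + 1) / ((3 / 2 + (k + n)) * (b + 1 + (k + n)))) *
      (-X / 4) := by
  have e1 : 2 * (k + 1) + n = 2 * k + n + 1 + 1 := by ring
  have e2 : k + 1 + n = k + n + 1 := by ring
  have : 0 < poch (3 / 2) (k + n) := poch_pos (by norm_num) _
  have : 0 < poch (b + 1) (k + n) := poch_pos (by linarith) _
  have : (0 : ℝ) < b + 1 + (k + n) := by linarith [k.cast_nonneg (α := ℝ), n.cast_nonneg (α := ℝ)]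
  simp only [termD, e1, e2, poch_succ]
  push_cast
  field_simp
  ring

lemma termD_ratio_le {k n : ℝ} (ha0 : 0 < a) (ha2 : a ≤ 2) (hb : -1 / 2 ≤ b)
    (hk : 0 ≤ k) (hn : 0 ≤ n) :
    (a + (2 * k + n)) * (a + (2 * k + n) + 1) / ((3 / 2 + (k + n)) * (b + 1 + (k + n))) ≤
      4 * (k + 2) / (k + 1) := by
  have : 0 < b + 1 + (k + n) := by linarith
  rw [div_le_div_iff₀ (by positivity) (by positivity)]
  have ha : 0 ≤ 2 - a := by linarith
  have hb' : 0 ≤ b + 1 / 2 := by linarith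
  nlinarith [mul_nonneg hk hn, mul_nonneg hk hk, mul_nonneg hn hn, mul_nonneg (mul_nonneg hk hk) hn,
    mul_nonneg hk ha, mul_nonneg hn ha, mul_nonneg ha ha0.le, mul_nonneg (mul_nonneg hk hk) hb',
    mul_nonneg hk hb', mul_nonneg hn hb', mul_nonneg (mul_nonneg hk hn) hb']

lemma abs_termD_le (ha0 : 0 < a) (ha2 : a ≤ 2) (hb : -1 / 2 ≤ b) {X : ℝ} (hX : 0 ≤ X)
    (n k : ℕ) : |termD a b X (n, k)| ≤ |termF a b 0 n| * ((k + 1) * X ^ k) := by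
  induction k with
  | zero => simp [termD_zero_snd]
  | succ k ih =>
    have hk : (0 : ℝ) ≤ k := k.cast_nonneg
    have hratio := termD_ratio_le ha0 ha2 hb hk n.cast_nonneg
    have hnum : 0 ≤ (a + (2 * k + n)) * (a + (2 * k + n) + 1) := by
      have : 0 ≤ a + (2 * k + n) := by positivity
      positivity
    have hden : 0 < (3 / 2 + (k + n)) * (b + 1 + (k + n) : ℝ) := by
      have : 0 < b + 1 + (k + n : ℝ) := by linarith [n.cast_nonneg (α := ℝ)]
      positivity
    rw [termD_succ_snd (by linarith), abs_mul, abs_mul, abs_of_nonneg (div_nonneg hnum hden.le),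
      abs_div, abs_neg, abs_of_nonneg hX, abs_of_pos (four_pos (α := ℝ))]
    calc |termD a b X (n, k)| * _ * (X / 4)
        ≤ |termF a b 0 n| * ((k + 1) * X ^ k) * (4 * (k + 2) / (k + 1)) * (X / 4) := by
          gcongr
      _ = |termF a b 0 n| * ((↑(k + 1) + 1) * X ^ (k + 1)) := by
          push_cast
          field_simp
          ring

lemma summable_termD (ha0 : 0 < a) (ha2 : a < 2) (hb : -1 / 2 < b) (hb2 : b ≤ 3 / 2) {X : ℝ}
    (hX0 : 0 ≤ X) (hX1 : X < 1) : Summable (termD a b X) := by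
  have hXn : ‖X‖ < 1 := by rwa [Real.norm_of_nonneg hX0]
  have hgeom : Summable fun k : ℕ => ((k : ℝ) + 1) * X ^ k := by
    simpa [add_mul] using (hasSum_coe_mul_geometric_of_norm_lt_one hXn).summable.add
      (summable_geometric_of_lt_one hX0 hX1)
  refine .of_norm_bounded ((summable_termF ha0 ha2 hb hb2 0).abs.mul_of_nonneg hgeom
    (fun _ => abs_nonneg _) (fun _ => by positivity)) fun nk => ?_
  exact abs_termD_le ha0 ha2.le hb.le hX0 nk.1 nk.2

lemma termD_eq_mul (hb : -1 < b) (X : ℝ) (n k : ℕ) :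
    termD a b X (n, k) =
      poch a (2 * k) / (4 ^ k * poch (3 / 2) k * poch (b + 1) k) * termF a b k n * (-X) ^ k := by
  have : 0 < poch (3 / 2) k := poch_pos (by norm_num) _
  have : 0 < poch (b + 1) k := poch_pos (by linarith) _
  have : 0 < poch (3 / 2 + (k : ℝ)) n := poch_pos (by positivity) _
  have : 0 < poch (b + 1 + (k : ℝ)) n := poch_pos (by linarith [k.cast_nonneg (α := ℝ)]) _
  have ea : poch a (2 * k + n) = poch a (2 * k) * poch (a + 2 * (k : ℝ)) n := by
    rw [poch_add]; push_cast; ring_nf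
  simp only [termD, termF, ea, poch_add, div_pow]
  field_simp

lemma tsum_termD_eq_mul_tsum_termF (hb : -1 < b) (X : ℝ) (k : ℕ) :
    ∑' n, termD a b X (n, k) =
      poch a (2 * k) / (4 ^ k * poch (3 / 2) k * poch (b + 1) k) * (∑' j, termF a b k j) *
        (-X) ^ k := by
  simp only [termD_eq_mul hb, tsum_mul_right, tsum_mul_left]

end

theorem stmt_0 (a b X : ℝ) (ha0 : 0 < a) (ha2 : a < 2)
    (hb1 : (a - 1) / 2 < b) (hb2 : b ≤ 3 / 2)
    (hX0 : 0 ≤ X) (hX1 : X < 1) :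
    Summable (fun nk : ℕ × ℕ =>
        poch a (2 * nk.2 + nk.1) * poch (1 / 2) nk.1 * poch b nk.1 /
          (poch (3 / 2) (nk.2 + nk.1) * poch (b + 1) (nk.2 + nk.1) *
            (Nat.factorial nk.1 : ℝ)) * (-X / 4) ^ nk.2) ∧
    (∀ k : ℕ, Summable (fun j : ℕ =>
        poch (a + 2 * (k : ℝ)) j * poch (1 / 2) j * poch b j /
          (poch (3 / 2 + (k : ℝ)) j * poch (b + 1 + (k : ℝ)) j * (Nat.factorial j : ℝ)))) ∧
    Summable (fun k : ℕ =>
        (poch a (2 * k) / (4 ^ k * poch (3 / 2) k * poch (b + 1) k)) *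
          (∑' j : ℕ, poch (a + 2 * (k : ℝ)) j * poch (1 / 2) j * poch b j /
            (poch (3 / 2 + (k : ℝ)) j * poch (b + 1 + (k : ℝ)) j * (Nat.factorial j : ℝ))) *
          (-X) ^ k) ∧
    (∑' k : ℕ,
        (poch a (2 * k) / (4 ^ k * poch (3 / 2) k * poch (b + 1) k)) *
          (∑' j : ℕ, poch (a + 2 * (k : ℝ)) j * poch (1 / 2) j * poch b j /
            (poch (3 / 2 + (k : ℝ)) j * poch (b + 1 + (k : ℝ)) j * (Nat.factorial j : ℝ))) *
          (-X) ^ k) =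
      ∑' nk : ℕ × ℕ,
        poch a (2 * nk.2 + nk.1) * poch (1 / 2) nk.1 * poch b nk.1 /
          (poch (3 / 2) (nk.2 + nk.1) * poch (b + 1) (nk.2 + nk.1) *
            (Nat.factorial nk.1 : ℝ)) * (-X / 4) ^ nk.2 := by
  have hb : -1 / 2 < b := by linarith
  have hD := summable_termD ha0 ha2 hb hb2 hX0 hX1
  have hfiber := tsum_termD_eq_mul_tsum_termF (a := a) (b := b) (by linarith) X
  refine ⟨hD, summable_termF ha0 ha2 hb hb2, ?_, ?_⟩
  · exact hD.prod_symm.prod.congr hfiber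
  · calc _ = ∑' k : ℕ, ∑' n : ℕ, termD a b X (n, k) := tsum_congr fun k => (hfiber k).symm
      _ = ∑' kn : ℕ × ℕ, termD a b X kn.swap := hD.prod_symm.tsum_prod.symm
      _ = _ := (Equiv.prodComm ℕ ℕ).tsum_eq (termD a b X)
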